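/- For any finite pattern P ⊂ ℤ², the fill closure φ(P) is a disjoint union of translated discrete triangles: there exist r ≥ 0, positive integers k₁,…,k_r, and vectors v₁,…,v_r ∈ ℤ² such that φ(P) = ⋃ᵢ (vᵢ + T_{kᵢ}), the sets vᵢ + T_{kᵢ} are pairwise non-touching (no point of one is in the neighbourhood of another), and Σᵢ kᵢ ≤ |P|. -/

import Mathlib

open Set Relation

/-- Points of the plane lattice. -/
abbrev Pt : Type := ℤ × ℤ

/-- The triangle shape `T = {(0,1),(1,1),(1,0)}`. -/
def Tshape : Set Pt := {(0, 1), (1, 1), (1, 0)}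

/-- Translate of a set of points by a vector. -/
def transl (v : Pt) (S : Set Pt) : Set Pt := (fun p => v + p) '' S

/-- Translate of a finite set of points by a vector. -/
def transF (v : Pt) (S : Finset Pt) : Finset Pt := S.image (fun p => v + p)

/-- A set is filled if every translate of `T` containing at least two of its
points is contained in it. -/
def Filled (F : Set Pt) : Prop :=
  ∀ v : Pt, 2 ≤ (F ∩ transl v Tshape).ncard → transl v Tshape ⊆ F

/-- The fill closure `φ(P)`: smallest filled superset of `P`. -/
def fill (P : Set Pt) : Set Pt := ⋂₀ {F | P ⊆ F ∧ Filled F}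

/-- A single triangle solitaire move: if a translate `v + T` contains exactly two
points of `P`, replace one of them by the third point of `v + T`. -/
def Move (P Q : Finset Pt) : Prop :=
  ∃ v x y : Pt, x ∈ Tshape ∧ y ∈ Tshape ∧ x ≠ y ∧
    v + x ∈ P ∧ v + y ∉ P ∧
    ((P : Set Pt) ∩ transl v Tshape).ncard = 2 ∧
    (Q : Set Pt) = insert (v + y) ((P : Set Pt) \ {v + x})

/-- `Q` is in the solitaire orbit of `P`. -/
def InOrbit (P Q : Finset Pt) : Prop := Relation.ReflTransGen Move P Q

/-- The discrete triangle `T_n = {(a,b) ∈ {0,…,n−1}² : a + b ≥ n − 1}`. -/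
def triangle (n : ℕ) : Set Pt :=
  {p | 0 ≤ p.1 ∧ p.1 < (n : ℤ) ∧ 0 ≤ p.2 ∧ p.2 < (n : ℤ) ∧ (n : ℤ) - 1 ≤ p.1 + p.2}

/-- Neighbourhood of a point: the other points sharing a translate of `T` with it. -/
def nbr (x : Pt) : Set Pt :=
  {y | y ≠ x ∧ ∃ v : Pt, x ∈ transl v Tshape ∧ y ∈ transl v Tshape}

/-- Neighbourhood of a set. -/
def nbrSet (A : Set Pt) : Set Pt := ⋃ a ∈ A, nbr a

/-- Two sets touch if one meets the neighbourhood of the other. -/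
def Touch (A B : Set Pt) : Prop := (A ∩ nbrSet B).Nonempty ∨ (B ∩ nbrSet A).Nonempty

/-- `(r, k, v)` is a decomposition of `φ(P)` into pairwise non-touching
translated triangles `vᵢ + T_{kᵢ}`. -/
def IsDecomp (P : Finset Pt) (r : ℕ) (k : Fin r → ℕ) (v : Fin r → Pt) : Prop :=
  (fill (P : Set Pt) = ⋃ i, transl (v i) (triangle (k i))) ∧
  (∀ i, 1 ≤ k i) ∧
  (∀ i j, i ≠ j → ¬ Touch (transl (v i) (triangle (k i))) (transl (v j) (triangle (k j))))

/-- The horizontal line `L_n = {(a, n−1) : 0 ≤ a ≤ n−1}` (top edge of `T_n`). -/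
def lineF (n : ℕ) : Finset Pt :=
  (Finset.range n).image (fun a : ℕ => (((a : ℤ), (n : ℤ) - 1) : Pt))

/-- The vertical edge `{(n−1, b) : 0 ≤ b ≤ n−1}` of `T_n`. -/
def vlineF (n : ℕ) : Finset Pt :=
  (Finset.range n).image (fun b : ℕ => ((((n : ℤ) - 1), (b : ℤ)) : Pt))

/-- The diagonal edge `{(a, n−1−a) : 0 ≤ a ≤ n−1}` of `T_n`. -/
def dlineF (n : ℕ) : Finset Pt :=
  (Finset.range n).image (fun a : ℕ => (((a : ℤ), (n : ℤ) - 1 - (a : ℤ)) : Pt))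

/-- The points of `T_n` below the top line, listed row `n−2` down to row `0`,
each row from right to left. -/
def belowPts (n : ℕ) : List Pt :=
  (List.range (n - 1)).flatMap (fun i =>
    (List.range (n - 1 - i)).map (fun t =>
      (((n : ℤ) - 1 - (t : ℤ), (n : ℤ) - 2 - (i : ℤ)) : Pt)))

/-- The canonical pattern `P_{n,k}`: the line `L_n` together with the first `k`
points of `T_n \ L_n` in the order: row `n−2` right to left, then row `n−3`, etc. -/
def PnkF (n k : ℕ) : Finset Pt := lineF n ∪ ((belowPts n).take k).toFinset

/-- A TEP family on the triangle shape, with cells ordered `(0,1), (1,1), (1,0)`: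
any two of the three symbols determine the third uniquely. -/
def IsTEP {A : Type} (R : Set (A × A × A)) : Prop :=
  (∀ a b : A, ∃! c : A, (a, b, c) ∈ R) ∧
  (∀ a c : A, ∃! b : A, (a, b, c) ∈ R) ∧
  (∀ b c : A, ∃! a : A, (a, b, c) ∈ R)

/-- A colouring is valid on `T_n` if every translate of `T` inside `T_n`
carries a pattern of `R`. -/
def ValidOn {A : Type} (R : Set (A × A × A)) (n : ℕ) (x : Pt → A) : Prop :=
  ∀ v : Pt, transl v Tshape ⊆ triangle n →
    (x (v + (0, 1)), x (v + (1, 1)), x (v + (1, 0))) ∈ R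

/-- One completion step: a translate of `T` inside `T_n` has exactly two
coloured cells; colour the third using the TEP rule `R`. States are pairs
(set of coloured cells, colouring). -/
def TStep {A : Type} (R : Set (A × A × A)) (n : ℕ)
    (s t : Set Pt × (Pt → A)) : Prop :=
  ∃ v : Pt, transl v Tshape ⊆ triangle n ∧
    ∃ c ∈ transl v Tshape, c ∉ s.1 ∧ transl v Tshape \ {c} ⊆ s.1 ∧
      t.1 = insert c s.1 ∧ (∀ p : Pt, p ≠ c → t.2 p = s.2 p) ∧
      (t.2 (v + (0, 1)), t.2 (v + (1, 1)), t.2 (v + (1, 0))) ∈ R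

/-- `P ⊆ T_n` is a basis: for every colouring of `P`, every maximal run of the
iterative completion process covers `T_n` and produces a valid pattern. -/
def IsBasis {A : Type} (R : Set (A × A × A)) (n : ℕ) (P : Finset Pt) : Prop :=
  (P : Set Pt) ⊆ triangle n ∧
  ∀ q : Pt → A, ∀ s : Set Pt × (Pt → A),
    Relation.ReflTransGen (TStep R n) ((P : Set Pt), q) s →
    (∀ t, ¬ TStep R n s t) →
    triangle n ⊆ s.1 ∧ ValidOn R n s.2

/-! Translated triangles are filled, and so is a union of pairwise non-touching filled sets.
If two triangles touch, the fill closure of their union is their hull: starting from one of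
them, a neighbouring point of the other lying just outside a side spreads along the whole line
beyond that side, so the triangle grows by one row at a time until it contains both. Touching
forces the hull's size to be at most the sum of the two sizes. Adding the points of `P` one at a
time, each new point is a triangle of size one, merged repeatedly with every triangle it touches,
so the total size grows by at most one per point. -/

theorem mem_transl_Tshape {v p : Pt} :
    p ∈ transl v Tshape ↔ (p.1 = v.1 ∧ p.2 = v.2 + 1) ∨ (p.1 = v.1 + 1 ∧ p.2 = v.2 + 1) ∨
      (p.1 = v.1 + 1 ∧ p.2 = v.2) := by
  simp only [transl, Tshape, Set.image_insert_eq, Set.image_singleton, Set.mem_insert_iff,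
    Set.mem_singleton_iff, Prod.ext_iff, Prod.fst_add, Prod.snd_add]
  omega

theorem transl_Tshape_finite (v : Pt) : (transl v Tshape).Finite :=
  (Set.toFinite ({(0, 1), (1, 1), (1, 0)} : Set Pt)).image _

theorem filled_iff {F : Set Pt} :
    Filled F ↔ ∀ v, ∀ p ∈ transl v Tshape, ∀ q ∈ transl v Tshape, p ≠ q → p ∈ F → q ∈ F →
      transl v Tshape ⊆ F := by
  refine forall_congr' fun v => ?_
  change 1 < _ → _ ↔ _
  rw [Set.one_lt_ncard_iff ((transl_Tshape_finite v).inter_of_right F)]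
  constructor
  · intro h p hp q hq hpq hpF hqF
    exact h ⟨p, q, ⟨hpF, hp⟩, ⟨hqF, hq⟩, hpq⟩
  · rintro h ⟨p, q, ⟨hpF, hp⟩, ⟨hqF, hq⟩, hpq⟩
    exact h p hp q hq hpq hpF hqF

namespace Filled

variable {F : Set Pt}

theorem mem_of_mem_of_mem (hF : Filled F) {v p q r : Pt} (hp : p ∈ transl v Tshape)
    (hq : q ∈ transl v Tshape) (hr : r ∈ transl v Tshape) (hpq : p ≠ q) (hpF : p ∈ F)
    (hqF : q ∈ F) : r ∈ F :=
  filled_iff.1 hF v p hp q hq hpq hpF hqF hr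

/-! The three cells of `(x, y) + T` are `(x, y + 1)`, `(x + 1, y + 1)` and `(x + 1, y)`. -/

theorem corner_mem (hF : Filled F) {x y : ℤ} (h₁ : (x, y + 1) ∈ F) (h₂ : (x + 1, y) ∈ F) :
    (x + 1, y + 1) ∈ F :=
  hF.mem_of_mem_of_mem (v := (x, y)) (mem_transl_Tshape.2 (by omega))
    (mem_transl_Tshape.2 (by omega)) (mem_transl_Tshape.2 (by omega)) (by simp) h₁ h₂

theorem bottom_mem (hF : Filled F) {x y : ℤ} (h₁ : (x, y + 1) ∈ F) (h₂ : (x + 1, y + 1) ∈ F) :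
    (x + 1, y) ∈ F :=
  hF.mem_of_mem_of_mem (v := (x, y)) (mem_transl_Tshape.2 (by omega))
    (mem_transl_Tshape.2 (by omega)) (mem_transl_Tshape.2 (by omega)) (by simp) h₁ h₂

theorem left_mem (hF : Filled F) {x y : ℤ} (h₁ : (x + 1, y + 1) ∈ F) (h₂ : (x + 1, y) ∈ F) :
    (x, y + 1) ∈ F :=
  hF.mem_of_mem_of_mem (v := (x, y)) (mem_transl_Tshape.2 (by omega))
    (mem_transl_Tshape.2 (by omega)) (mem_transl_Tshape.2 (by omega)) (by simp) h₁ h₂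

end Filled

theorem subset_fill (P : Set Pt) : P ⊆ fill P :=
  fun _ hx _ hF => hF.1 hx

theorem fill_subset {P F : Set Pt} (hPF : P ⊆ F) (hF : Filled F) : fill P ⊆ F :=
  fun _ hx => hx F ⟨hPF, hF⟩

theorem Filled.fill_eq {F : Set Pt} (hF : Filled F) : fill F = F :=
  (fill_subset subset_rfl hF).antisymm (subset_fill F)

theorem fill_mono {P Q : Set Pt} (h : P ⊆ Q) : fill P ⊆ fill Q :=
  fun _ hx F hF => hx F ⟨h.trans hF.1, hF.2⟩

theorem filled_fill (P : Set Pt) : Filled (fill P) := by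
  refine filled_iff.2 fun v p hp q hq hpq hpF hqF r hr F (hF : P ⊆ F ∧ Filled F) => ?_
  exact hF.2.mem_of_mem_of_mem hp hq hr hpq (hpF F hF) (hqF F hF)

theorem fill_union_fill (A B : Set Pt) : fill (A ∪ fill B) = fill (A ∪ B) :=
  (fill_subset (Set.union_subset (Set.subset_union_left.trans (subset_fill _))
    (fill_mono Set.subset_union_right)) (filled_fill _)).antisymm
    (fill_mono (Set.union_subset_union_right _ (subset_fill B)))

theorem mem_nbr_iff {x y : Pt} : y ∈ nbr x ↔
    (y.1 = x.1 + 1 ∧ y.2 = x.2) ∨ (y.1 = x.1 - 1 ∧ y.2 = x.2) ∨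
    (y.1 = x.1 ∧ y.2 = x.2 + 1) ∨ (y.1 = x.1 ∧ y.2 = x.2 - 1) ∨
    (y.1 = x.1 + 1 ∧ y.2 = x.2 - 1) ∨ (y.1 = x.1 - 1 ∧ y.2 = x.2 + 1) := by
  simp only [nbr, Set.mem_ofPred_eq, ne_eq, Prod.ext_iff, mem_transl_Tshape]
  constructor
  · rintro ⟨hne, v, hx, hy⟩
    omega
  · intro h
    -- two distinct cells of `v + T` determine `v` as their coordinatewise maximum minus `(1, 1)`
    exact ⟨by omega, (max x.1 y.1 - 1, max x.2 y.2 - 1), by omega, by omega⟩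

theorem mem_nbr_comm {x y : Pt} : y ∈ nbr x ↔ x ∈ nbr y := by
  rw [mem_nbr_iff, mem_nbr_iff]
  omega

theorem touch_iff {A B : Set Pt} : Touch A B ↔ ∃ p ∈ A, ∃ q ∈ B, q ∈ nbr p := by
  simp only [Touch, nbrSet, Set.Nonempty, Set.mem_inter_iff, Set.mem_iUnion, exists_prop]
  constructor
  · rintro (⟨p, hp, q, hq, hpq⟩ | ⟨q, hq, p, hp, hqp⟩)
    · exact ⟨p, hp, q, hq, mem_nbr_comm.1 hpq⟩
    · exact ⟨p, hp, q, hq, hqp⟩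
  · rintro ⟨p, hp, q, hq, hqp⟩
    exact Or.inr ⟨q, hq, p, hp, hqp⟩

theorem touch_comm {A B : Set Pt} : Touch A B ↔ Touch B A := or_comm

theorem filled_biUnion {ι : Type*} {s : Set ι} {S : ι → Set Pt} (hS : ∀ i ∈ s, Filled (S i))
    (hs : s.Pairwise fun i j => ¬Touch (S i) (S j)) : Filled (⋃ i ∈ s, S i) := by
  refine filled_iff.2 fun v p hp q hq hpq hpS hqS => ?_
  simp only [Set.mem_iUnion, exists_prop] at hpS hqS
  obtain ⟨i, hi, hpi⟩ := hpS
  obtain ⟨j, hj, hqj⟩ := hqS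
  obtain rfl : i = j := by
    by_contra hij
    exact hs hi hj hij (touch_iff.2 ⟨p, hpi, q, hqj, ⟨Ne.symm hpq, v, hp, hq⟩⟩)
  exact fun r hr => Set.mem_biUnion hi ((hS i hi).mem_of_mem_of_mem hp hq hr hpq hpi hqj)

theorem Int.iff_of_iff_succ {P : ℤ → Prop} {lo hi : ℤ}
    (step : ∀ y ∈ Set.Ico lo hi, P y ↔ P (y + 1)) : ∀ y ∈ Set.Icc lo hi, P y ↔ P lo := by
  rintro y ⟨hlo, hhi⟩
  induction y, hlo using Int.leInduction with
  | base => rfl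
  | succ y hy ih => exact (step y ⟨hy, by omega⟩).symm.trans (ih (by omega))

theorem Relation.ReflTransGen.exists_boundary {α : Type*} {r : α → α → Prop} {C : Set α}
    {x y : α} (h : Relation.ReflTransGen r x y) (hx : x ∈ C) (hy : y ∉ C) :
    ∃ u ∈ C, ∃ w ∉ C, r u w := by
  induction h with
  | refl => exact absurd hx hy
  | @tail b _ _ hbc ih =>
    by_cases hb : b ∈ C
    · exact ⟨b, hb, _, hy, hbc⟩
    · exact ih hb

/-- Triangles are encoded by their side lines `x = a`, `y = b`, `x + y = c`, so that the hull of
two triangles is computed side by side. -/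
@[ext]
structure Tri where
  a : ℤ
  b : ℤ
  c : ℤ
  c_le : c ≤ a + b

namespace Tri

def toSet (t : Tri) : Set Pt := {p | p.1 ≤ t.a ∧ p.2 ≤ t.b ∧ t.c ≤ p.1 + p.2}

def side (t : Tri) : ℕ := (t.a + t.b - t.c).toNat + 1

def single (p : Pt) : Tri := ⟨p.1, p.2, p.1 + p.2, le_rfl⟩

def corner (t : Tri) : Pt := (t.c - t.b, t.c - t.a)

def hull (s t : Tri) : Tri :=
  ⟨max s.a t.a, max s.b t.b, min s.c t.c, by have := s.c_le; have := t.c_le; omega⟩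

variable {F : Set Pt} {s t : Tri} {p : Pt}

@[simp]
theorem mem_toSet : p ∈ t.toSet ↔ p.1 ≤ t.a ∧ p.2 ≤ t.b ∧ t.c ≤ p.1 + p.2 := Iff.rfl

theorem toSet_single (p : Pt) : (single p).toSet = {p} := by
  ext q
  simp only [mem_toSet, single, Set.mem_singleton_iff, Prod.ext_iff]
  omega

theorem toSet_subset_toSet : s.toSet ⊆ t.toSet ↔ s.a ≤ t.a ∧ s.b ≤ t.b ∧ t.c ≤ s.c := by
  refine ⟨fun h => ?_, fun h q hq => by simp only [mem_toSet] at hq ⊢; omega⟩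
  have := s.c_le
  have h₁ := h (show (s.a, s.b) ∈ s.toSet by simp [this])
  have h₂ := h (show (s.a, s.c - s.a) ∈ s.toSet by simp; omega)
  simp only [mem_toSet] at h₁ h₂
  omega

theorem toSet_eq_transl (t : Tri) :
    t.toSet = transl t.corner (triangle t.side) := by
  have := t.c_le
  ext q
  simp only [mem_toSet, transl, triangle, side, corner, Set.mem_image, Set.mem_ofPred_eq]
  constructor
  · intro hq
    exact ⟨(q.1 - (t.c - t.b), q.2 - (t.c - t.a)), by omega, by ext <;> simp⟩
  · rintro ⟨r, hr, rfl⟩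
    simp only [Prod.fst_add, Prod.snd_add]
    omega

theorem filled_toSet (t : Tri) : Filled t.toSet := by
  refine filled_iff.2 fun v p hp q hq hpq hpt hqt r hr => ?_
  simp only [mem_toSet, mem_transl_Tshape, ne_eq, Prod.ext_iff] at *
  omega

/-! Growing a triangle `s ⊆ F` inside a filled set `F`: one point of `F` on a line just outside
a side of `s` propagates along that line, one `T`-translate at a time. -/

theorem right_side_mem (hF : Filled F) (hs : s.toSet ⊆ F) {y₀ : ℤ}
    (hy₀ : y₀ ∈ Set.Icc (s.c - s.a - 1) s.b) (h₀ : (s.a + 1, y₀) ∈ F) :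
    ∀ y ∈ Set.Icc (s.c - s.a - 1) s.b, (s.a + 1, y) ∈ F := by
  have key := Int.iff_of_iff_succ (P := fun y => (s.a + 1, y) ∈ F) (lo := s.c - s.a - 1) (hi := s.b) fun y hy =>
    have hL : (s.a, y + 1) ∈ F := hs (by simp only [Set.mem_Ico] at hy; simp; omega)
    ⟨hF.corner_mem hL, hF.bottom_mem hL⟩
  exact fun y hy => (key y hy).2 ((key y₀ hy₀).1 h₀)

theorem top_side_mem (hF : Filled F) (hs : s.toSet ⊆ F) {x₀ : ℤ}
    (hx₀ : x₀ ∈ Set.Icc (s.c - s.b - 1) s.a) (h₀ : (x₀, s.b + 1) ∈ F) :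
    ∀ x ∈ Set.Icc (s.c - s.b - 1) s.a, (x, s.b + 1) ∈ F := by
  have key := Int.iff_of_iff_succ (P := fun x => (x, s.b + 1) ∈ F) (lo := s.c - s.b - 1) (hi := s.a) fun x hx =>
    have hB : (x + 1, s.b) ∈ F := hs (by simp only [Set.mem_Ico] at hx; simp; omega)
    ⟨fun h => hF.corner_mem h hB, fun h => hF.left_mem h hB⟩
  exact fun x hx => (key x hx).2 ((key x₀ hx₀).1 h₀)

theorem diag_side_mem (hF : Filled F) (hs : s.toSet ⊆ F) {x₀ : ℤ}
    (hx₀ : x₀ ∈ Set.Icc (s.c - 1 - s.b) s.a) (h₀ : (x₀, s.c - 1 - x₀) ∈ F) :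
    ∀ x ∈ Set.Icc (s.c - 1 - s.b) s.a, (x, s.c - 1 - x) ∈ F := by
  have key := Int.iff_of_iff_succ (P := fun x => (x, s.c - 1 - x) ∈ F) (lo := s.c - 1 - s.b)
    (hi := s.a) fun x hx => by
    have hK : (x + 1, s.c - 1 - (x + 1) + 1) ∈ F :=
      hs (by simp only [Set.mem_Ico] at hx; simp; omega)
    rw [show s.c - 1 - x = s.c - 1 - (x + 1) + 1 by ring]
    exact ⟨fun h => hF.bottom_mem h hK, fun h => hF.left_mem hK h⟩
  exact fun x hx => (key x hx).2 ((key x₀ hx₀).1 h₀)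

theorem hull_single_subset (hF : Filled F) (hs : s.toSet ⊆ F) {u w : Pt} (hu : u ∈ s.toSet)
    (hw : w ∉ s.toSet) (huw : w ∈ nbr u) (hwF : w ∈ F) : (s.hull (single w)).toSet ⊆ F := by
  obtain ⟨w₁, w₂⟩ := w
  rintro ⟨q₁, q₂⟩ hq
  by_cases hqs : (q₁, q₂) ∈ s.toSet
  · exact hs hqs
  have := s.c_le
  simp only [mem_toSet, hull, single, mem_nbr_iff] at hu hw huw hq hqs
  rcases (by omega : (w₁ = s.a + 1 ∧ q₁ = s.a + 1) ∨ (w₂ = s.b + 1 ∧ q₂ = s.b + 1) ∨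
      (w₂ = s.c - 1 - w₁ ∧ q₂ = s.c - 1 - q₁)) with ⟨rfl, rfl⟩ | ⟨rfl, rfl⟩ | ⟨rfl, rfl⟩
  · exact right_side_mem hF hs ⟨by omega, by omega⟩ hwF _ ⟨by omega, by omega⟩
  · exact top_side_mem hF hs ⟨by omega, by omega⟩ hwF _ ⟨by omega, by omega⟩
  · exact diag_side_mem hF hs ⟨by omega, by omega⟩ hwF _ ⟨by omega, by omega⟩

theorem side_hull_single {u w : Pt} (hu : u ∈ s.toSet) (hw : w ∉ s.toSet) (huw : w ∈ nbr u) :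
    (s.hull (single w)).side = s.side + 1 := by
  have := s.c_le
  simp only [mem_toSet, mem_nbr_iff] at hu hw huw
  simp only [side, hull, single]
  omega

theorem reflTransGen_corner {p : Pt} (hp : p ∈ t.toSet) :
    Relation.ReflTransGen (fun u w => u ∈ t.toSet ∧ w ∈ t.toSet ∧ w ∈ nbr u) p (t.a, t.b) := by
  by_cases h₁ : p.1 < t.a
  · have hq : (p.1 + 1, p.2) ∈ t.toSet := by simp only [mem_toSet] at hp ⊢; omega
    exact .head ⟨hp, hq, mem_nbr_iff.2 (by omega)⟩ (reflTransGen_corner hq)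
  by_cases h₂ : p.2 < t.b
  · have hq : (p.1, p.2 + 1) ∈ t.toSet := by simp only [mem_toSet] at hp ⊢; omega
    exact .head ⟨hp, hq, mem_nbr_iff.2 (by omega)⟩ (reflTransGen_corner hq)
  obtain rfl : p = (t.a, t.b) := by simp only [mem_toSet] at hp; ext <;> simp <;> omega
  exact .refl
termination_by (t.a - p.1 + (t.b - p.2)).toNat
decreasing_by all_goals (simp only [mem_toSet] at hp; omega)

theorem exists_nbr_of_not_subset {C : Set Pt}
    (hCt : ∃ p ∈ C, ∃ q ∈ t.toSet, q = p ∨ q ∈ nbr p) (hC : ¬t.toSet ⊆ C) :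
    ∃ u ∈ C, ∃ w ∈ t.toSet, w ∉ C ∧ w ∈ nbr u := by
  obtain ⟨p, hp, q, hq, hpq⟩ := hCt
  by_cases hqC : q ∈ C
  swap
  · exact ⟨p, hp, q, hq, hqC, hpq.resolve_left (by rintro rfl; exact hqC hp)⟩
  obtain ⟨r, hr, hrC⟩ := Set.not_subset.1 hC
  by_cases hcorner : (t.a, t.b) ∈ C
  · obtain ⟨u, hu, w, hw, huw⟩ :=
      (reflTransGen_corner hr).exists_boundary (C := Cᶜ) hrC (by simpa using hcorner)
    exact ⟨w, by simpa using hw, u, huw.1, hu, mem_nbr_comm.1 huw.2.2⟩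
  · obtain ⟨u, hu, w, hw, huw⟩ := (reflTransGen_corner hq).exists_boundary hqC hcorner
    exact ⟨u, hu, w, huw.2.1, hw, huw.2.2⟩

theorem subset_hull_left : s.toSet ⊆ (s.hull t).toSet :=
  toSet_subset_toSet.2 (by simp only [hull]; omega)

theorem subset_hull_right : t.toSet ⊆ (s.hull t).toSet :=
  toSet_subset_toSet.2 (by simp only [hull]; omega)

theorem side_le_side_hull : s.side ≤ (s.hull t).side := by
  simp only [side, hull]
  omega

theorem hull_eq_left (h : t.toSet ⊆ s.toSet) : s.hull t = s := by
  rw [toSet_subset_toSet] at h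
  ext <;> simp only [hull] <;> omega

theorem hull_subset {s t : Tri} (hF : Filled F) (hs : s.toSet ⊆ F) (ht : t.toSet ⊆ F)
    (hst : ∃ p ∈ s.toSet, ∃ q ∈ t.toSet, q = p ∨ q ∈ nbr p) : (s.hull t).toSet ⊆ F := by
  by_cases hts : t.toSet ⊆ s.toSet
  · rwa [hull_eq_left hts]
  obtain ⟨u, hu, w, hwt, hws, huw⟩ := exists_nbr_of_not_subset hst hts
  have hw : (single w).toSet ⊆ t.toSet := by rwa [toSet_single, Set.singleton_subset_iff]
  have hull_eq : (s.hull (single w)).hull t = s.hull t := by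
    rw [toSet_subset_toSet] at hw
    ext <;> simp only [hull, single] at hw ⊢ <;> omega
  have hside := side_hull_single hu hws huw
  have hle := side_le_side_hull (s := s.hull (single w)) (t := t)
  rw [← hull_eq]
  exact hull_subset hF (hull_single_subset hF hs hu hws huw (ht hwt)) ht
    ⟨w, subset_hull_right (by simp [single]), w, hwt, Or.inl rfl⟩
termination_by (s.hull t).side - s.side
decreasing_by rw [hull_eq, hside] at hle ⊢; omega

theorem fill_union_eq_hull (h : Touch s.toSet t.toSet) :
    fill (s.toSet ∪ t.toSet) = (s.hull t).toSet := by
  obtain ⟨p, hp, q, hq, hpq⟩ := touch_iff.1 h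
  refine (fill_subset (Set.union_subset subset_hull_left subset_hull_right)
    (filled_toSet _)).antisymm (hull_subset (filled_fill _) ?_ ?_ ⟨p, hp, q, hq, Or.inr hpq⟩)
  · exact Set.subset_union_left.trans (subset_fill _)
  · exact Set.subset_union_right.trans (subset_fill _)

theorem side_hull_le (h : Touch s.toSet t.toSet) : (s.hull t).side ≤ s.side + t.side := by
  obtain ⟨p, hp, q, hq, hpq⟩ := touch_iff.1 h
  simp only [mem_toSet, mem_nbr_iff] at hp hq hpq
  simp only [side, hull]
  omega

def Separated (D : Finset Tri) : Prop :=
  (D : Set Tri).Pairwise fun s t => ¬Touch s.toSet t.toSet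

theorem side_single (p : Pt) : (single p).side = 1 := by
  simp [side, single]

theorem exists_separated_fill_union (s : Tri) (D : Finset Tri) (hD : Separated D) :
    ∃ D' : Finset Tri, Separated D' ∧ ⋃ t ∈ D', t.toSet = fill (s.toSet ∪ ⋃ t ∈ D, t.toSet) ∧
      ∑ t ∈ D', t.side ≤ s.side + ∑ t ∈ D, t.side := by
  classical
  induction D using Finset.strongInduction generalizing s with
  | H D ih =>
  by_cases h : ∃ t ∈ D, Touch s.toSet t.toSet
  · obtain ⟨t, htD, hst⟩ := h
    obtain ⟨D', hD', hunion, hsum⟩ := ih (D.erase t) (Finset.erase_ssubset htD) (s.hull t)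
      (hD.mono (by simp))
    refine ⟨D', hD', ?_, ?_⟩
    · rw [hunion, ← fill_union_eq_hull hst, Set.union_comm, fill_union_fill,
        ← Finset.insert_erase htD, Finset.set_biUnion_insert, Finset.erase_insert_eq_erase,
        Finset.erase_idem]
      congr 1
      ac_rfl
    · have := side_hull_le hst
      have := Finset.sum_erase_add D side htD
      omega
  · simp only [not_exists, not_and] at h
    have hD' : Separated (insert s D) := by
      rw [Separated, Finset.coe_insert]
      exact hD.insert fun t ht _ => ⟨h t ht, fun hts => h t ht (touch_comm.1 hts)⟩
    have hfilled := filled_biUnion (fun t _ => filled_toSet t) hD'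
    rw [Finset.set_biUnion_coe, Finset.set_biUnion_insert] at hfilled
    refine ⟨insert s D, hD', by rw [Finset.set_biUnion_insert, hfilled.fill_eq], ?_⟩
    by_cases hs : s ∈ D
    · rw [Finset.insert_eq_of_mem hs]
      omega
    · rw [Finset.sum_insert hs]

theorem exists_separated_fill (P : Finset Pt) :
    ∃ D : Finset Tri, Separated D ∧ ⋃ t ∈ D, t.toSet = fill P ∧ ∑ t ∈ D, t.side ≤ P.card := by
  classical
  induction P using Finset.induction_on with
  | empty =>
    have : Filled (∅ : Set Pt) := fun v h => by simp at h
    exact ⟨∅, by simp [Separated], by simp [this.fill_eq], by simp⟩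
  | insert p P hp ih =>
    obtain ⟨D, hD, hunion, hsum⟩ := ih
    obtain ⟨D', hD', hunion', hsum'⟩ := exists_separated_fill_union (single p) D hD
    refine ⟨D', hD', ?_, ?_⟩
    · rw [hunion', hunion, toSet_single, fill_union_fill, Finset.coe_insert, Set.insert_eq]
    · rw [Finset.card_insert_of_notMem hp, side_single] at *
      omega

end Tri

/-- the fill closure of any finite pattern decomposes into
pairwise non-touching translated triangles with total size at most `|P|`. -/
theorem fill_decomposition (P : Finset Pt) :
    ∃ (r : ℕ) (k : Fin r → ℕ) (v : Fin r → Pt),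
      IsDecomp P r k v ∧ ∑ i, k i ≤ P.card := by
  obtain ⟨D, hD, hunion, hsum⟩ := Tri.exists_separated_fill P
  let e : Fin D.card ≃ D := D.equivFin.symm
  have htri (i : Fin D.card) : transl (e i).1.corner (triangle (e i).1.side) = (e i).1.toSet :=
    (Tri.toSet_eq_transl _).symm
  refine ⟨D.card, fun i => (e i).1.side, fun i => (e i).1.corner,
    ⟨?_, fun i => Nat.le_add_left 1 _, fun i j hij => ?_⟩, ?_⟩
  · simp only [htri, ← hunion]
    rw [e.surjective.iUnion_comp (fun t : D => t.1.toSet), Set.iUnion_subtype]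
  · rw [htri, htri]
    exact hD (e i).2 (e j).2 (Subtype.val_injective.ne (e.injective.ne hij))
  · rwa [e.sum_comp (fun t : D => t.1.side), Finset.sum_coe_sort]
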